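/- Let G be a finite simple graph with girth at least g. Then for i = 0, 1, ..., g-2, the chromatic coefficient satisfies e_i(G) = binomial(|E(G)|, i). -/

import Mathlib

open Polynomial

/-- The number of proper colorings of `G` with `q` colors. -/
noncomputable def properColorings {V : Type*} (G : SimpleGraph V) (q : ℕ) : ℕ :=
  Nat.card {f : V → Fin q // ∀ ⦃x y⦄, G.Adj x y → f x ≠ f y}

/-!
Whitney's subgraph expansion writes the chromatic polynomial as
`∑_{S ⊆ E(G)} (-1)^|S| q^c(S)`, where `c(S)` is the number of components of the spanning
subgraph with edge set `S`; so `e_i` is `(-1)^i` times the signed count of the edge sets `S`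
with `c(S) = n - i`. A forest has `|S| + c(S) = n`, and a subgraph that is not a forest has a cycle
of length at most `n - c(S) + 1` (an edge outside a spanning forest closes one) and at most `|S|`.
Hence, as long as `i + 1` is below the girth, `c(S) = n - i` holds exactly for the `i`-edge sets,
which are all forests.
-/

open Finset SimpleGraph

namespace SimpleGraph

variable {V : Type*} {G : SimpleGraph V}

lemma Reachable.eq_of_forall_adj_eq {β : Sort*} {f : V → β}
    (hf : ∀ ⦃x y⦄, G.Adj x y → f x = f y) {u v : V} (h : G.Reachable u v) : f u = f v := by
  obtain ⟨p⟩ := h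
  induction p with
  | nil => rfl
  | cons hadj _ ih => exact (hf hadj).trans ih

variable (G) in
def ConnectedComponent.liftEquiv (β : Type*) :
    {f : V → β // ∀ ⦃x y⦄, G.Adj x y → f x = f y} ≃ (G.ConnectedComponent → β) where
  toFun f := ConnectedComponent.lift f.1 fun _ _ p _ ↦ p.reachable.eq_of_forall_adj_eq f.2
  invFun c := ⟨c ∘ G.connectedComponentMk,
    fun _ _ h ↦ congrArg c (ConnectedComponent.connectedComponentMk_eq_of_adj h)⟩
  left_inv _ := rfl
  right_inv _ := funext <| ConnectedComponent.ind fun _ ↦ rfl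

lemma card_connectedComponent_bot [Finite V] :
    Nat.card (⊥ : SimpleGraph V).ConnectedComponent = Nat.card V :=
  (Nat.card_eq_of_bijective _ ⟨fun _ _ h ↦ reachable_bot.mp (ConnectedComponent.exact h),
    Quot.mk_surjective⟩).symm

lemma card_connectedComponent_deleteEdges_of_isBridge [Finite V] {u v : V} (hadj : G.Adj u v)
    (hb : G.IsBridge s(u, v)) :
    Nat.card (G.deleteEdges {s(u, v)}).ConnectedComponent = Nat.card G.ConnectedComponent + 1 := by
  classical
  set G' := G.deleteEdges {s(u, v)}
  have huv : ¬G'.Reachable u v := isBridge_iff.mp hb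
  let φ : G'.ConnectedComponent → G.ConnectedComponent :=
    ConnectedComponent.map (Hom.ofLE (deleteEdges_le _))
  -- Gluing the component of `v` onto that of `u` undoes `φ` away from the component of `v`.
  let glue : V → G'.ConnectedComponent := fun w ↦
    if G'.Reachable w v then G'.connectedComponentMk u else G'.connectedComponentMk w
  have hglue : ∀ ⦃x y⦄, G.Adj x y → glue x = glue y := by
    intro x y hxy
    by_cases he : s(x, y) = s(u, v)
    · rcases Sym2.eq_iff.mp he with ⟨rfl, rfl⟩ | ⟨rfl, rfl⟩ <;> simp [glue]
    · have hr : G'.Reachable x y := Adj.reachable (by simp [G', hxy, he])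
      have hiff : G'.Reachable x v ↔ G'.Reachable y v := ⟨hr.symm.trans, hr.trans⟩
      simp only [glue, hiff, ConnectedComponent.sound hr]
  let ψ := ConnectedComponent.liftEquiv G _ ⟨glue, hglue⟩
  have hψ : ∀ c : {c // c ≠ G'.connectedComponentMk v}, ψ (φ c) = c := by
    rintro ⟨c, hc⟩
    induction c using ConnectedComponent.ind with
    | h w => exact if_neg (mt ConnectedComponent.sound hc)
  have hbij : Function.Bijective fun c : {c // c ≠ G'.connectedComponentMk v} ↦ φ c := by
    refine ⟨fun c d hcd ↦ Subtype.ext ?_, ConnectedComponent.ind fun w ↦ ?_⟩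
    · rw [← hψ c, ← hψ d]
      exact congrArg ψ hcd
    · by_cases hw : G'.Reachable w v
      · refine ⟨⟨G'.connectedComponentMk u, by simpa using huv⟩, ?_⟩
        exact ConnectedComponent.sound (hadj.reachable.trans (hw.mono (deleteEdges_le _)).symm)
      · exact ⟨⟨G'.connectedComponentMk w, by simpa using hw⟩, rfl⟩
  have hcompl := Set.ncard_add_ncard_compl {G'.connectedComponentMk v}
  rw [Set.ncard_singleton] at hcompl
  rw [← Nat.card_eq_of_bijective _ hbij]
  exact hcompl.symm.trans (add_comm _ _)

lemma card_edgeSet_deleteEdges_singleton_add_one [Finite V] {e : Sym2 V} (he : e ∈ G.edgeSet) :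
    Nat.card (G.deleteEdges {e}).edgeSet + 1 = Nat.card G.edgeSet := by
  simp only [edgeSet_deleteEdges, Nat.card_coe_set_eq]
  exact Set.ncard_sdiff_singleton_add_one he

theorem IsAcyclic.card_edgeSet_add_card_connectedComponent [Finite V] (hG : G.IsAcyclic) :
    Nat.card G.edgeSet + Nat.card G.ConnectedComponent = Nat.card V := by
  induction hn : Nat.card G.edgeSet generalizing G with
  | zero =>
    obtain rfl : G = ⊥ := edgeSet_eq_empty.mp ((Set.ncard_eq_zero).mp hn)
    simp [card_connectedComponent_bot]
  | succ n ih =>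
    obtain ⟨⟨e, he⟩⟩ : Nonempty G.edgeSet := (Nat.card_pos_iff.mp (by omega)).1
    induction e using Sym2.ind with
    | h u v =>
      have hdel := ih (hG.anti (deleteEdges_le {s(u, v)})) (by
        have := card_edgeSet_deleteEdges_singleton_add_one he
        omega)
      rw [card_connectedComponent_deleteEdges_of_isBridge he
        (isAcyclic_iff_forall_isBridge.mp hG he)] at hdel
      omega

lemma Walk.IsTrail.length_le_card_edgeSet [Finite G.edgeSet] {u v : V} {p : G.Walk u v}
    (hp : p.IsTrail) : p.length ≤ Nat.card G.edgeSet := by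
  have := Fintype.ofFinite G.edgeSet
  simpa [Nat.card_eq_fintype_card, edgeFinset_card] using hp.length_le_card_edgeFinset

lemma egirth_le_card_edgeSet [Finite G.edgeSet] (hG : ¬G.IsAcyclic) :
    G.egirth ≤ Nat.card G.edgeSet := by
  simp only [IsAcyclic, not_forall, not_not] at hG
  obtain ⟨_, p, hp⟩ := hG
  exact (egirth_le_length hp).trans (by exact_mod_cast hp.isTrail.length_le_card_edgeSet)

/-- An edge outside a spanning forest closes a cycle through a path of the forest. -/
theorem egirth_add_card_connectedComponent_le [Finite V] (hG : ¬G.IsAcyclic) :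
    G.egirth + Nat.card G.ConnectedComponent ≤ Nat.card V + 1 := by
  obtain ⟨F, hFG, hF, hreach⟩ := G.exists_isAcyclic_reachable_eq_le
  have hcc : Nat.card F.ConnectedComponent = Nat.card G.ConnectedComponent :=
    Nat.card_congr (Quot.congrRight fun _ _ ↦ by rw [hreach])
  have hlt : F < G := hFG.lt_of_ne (by rintro rfl; exact hG hF)
  obtain ⟨e, heG, heF⟩ := Set.exists_of_ssubset (edgeSet_strict_mono hlt)
  induction e using Sym2.ind with
  | h u v =>
    have hadj : G.Adj u v := heG
    obtain ⟨p, hp⟩ := (hreach ▸ hadj.reachable.symm : F.Reachable v u).exists_isPath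
    have hcycle : (Walk.cons hadj (p.mapLe hFG)).IsCycle := by
      rw [Walk.cons_isCycle_iff, Walk.edges_mapLe_eq_edges]
      exact ⟨hp.mapLe hFG, fun h ↦ heF (p.edges_subset_edgeSet h)⟩
    have hlen : p.length + 1 + Nat.card F.ConnectedComponent ≤ Nat.card V + 1 := by
      have := hp.isTrail.length_le_card_edgeSet
      have := hF.card_edgeSet_add_card_connectedComponent
      omega
    calc G.egirth + Nat.card G.ConnectedComponent
        ≤ (p.length + 1 : ℕ) + Nat.card F.ConnectedComponent := by
          rw [hcc]
          gcongr
          simpa using egirth_le_length hcycle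
      _ ≤ Nat.card V + 1 := by exact_mod_cast hlen

theorem card_edgeSet_eq_iff_of_lt_egirth [Finite V] {k : ℕ} (hk : (k + 1 : ℕ∞) < G.egirth) :
    Nat.card G.edgeSet = k ↔ Nat.card G.ConnectedComponent + k = Nat.card V := by
  by_cases hG : G.IsAcyclic
  · have := hG.card_edgeSet_add_card_connectedComponent
    omega
  · obtain ⟨m, hm⟩ := ENat.ne_top_iff_exists.mp (mt egirth_eq_top.mp hG)
    have hE := egirth_le_card_edgeSet hG
    have hcc := egirth_add_card_connectedComponent_le hG
    rw [← hm] at hk hE hcc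
    norm_cast at hk hE hcc
    omega

theorem isAcyclic_of_card_lt_egirth [Finite V] (h : (Nat.card V : ℕ∞) < G.egirth) :
    G.IsAcyclic := by
  by_contra hG
  obtain ⟨m, hm⟩ := ENat.ne_top_iff_exists.mp (mt egirth_eq_top.mp hG)
  have : Nonempty V := by
    simp only [IsAcyclic, not_forall] at hG
    exact ⟨hG.choose⟩
  have hpos : 0 < Nat.card G.ConnectedComponent := Nat.card_pos
  have hcc := egirth_add_card_connectedComponent_le hG
  rw [← hm] at h hcc
  norm_cast at h hcc
  omega

lemma card_edgeSet_fromEdgeSet {S : Finset (Sym2 V)} (hS : ∀ e ∈ S, ¬e.IsDiag) :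
    Nat.card (fromEdgeSet (S : Set (Sym2 V))).edgeSet = #S := by
  have hdiag : (S : Set (Sym2 V)) \ Sym2.diagSet = S :=
    sdiff_eq_left.mpr (Set.disjoint_left.mpr hS)
  rw [edgeSet_fromEdgeSet, hdiag, Nat.card_coe_set_eq, Set.ncard_coe_finset]

lemma forall_adj_fromEdgeSet_eq_iff {β : Type*} {f : V → β} {s : Set (Sym2 V)} :
    (∀ ⦃x y⦄, (fromEdgeSet s).Adj x y → f x = f y) ↔ ∀ e ∈ s, (e.map f).IsDiag := by
  refine ⟨fun h e he ↦ ?_, fun h x y hxy ↦ h _ ((fromEdgeSet_adj s).mp hxy).1⟩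
  induction e using Sym2.ind with
  | h x y =>
    by_cases hxy : x = y
    · simp [hxy]
    · exact h ((fromEdgeSet_adj s).mpr ⟨he, hxy⟩)

noncomputable def numComponents (S : Finset (Sym2 V)) : ℕ :=
  Nat.card (fromEdgeSet (S : Set (Sym2 V))).ConnectedComponent

variable [Fintype V]

theorem filter_numComponents_eq_powersetCard_of_lt_egirth [DecidableRel G.Adj] {i : ℕ}
    (hgirth : (i + 1 : ℕ∞) < G.egirth) (hi : i ≤ Fintype.card V) :
    {S ∈ G.edgeFinset.powerset | numComponents S = Fintype.card V - i} =
      G.edgeFinset.powersetCard i := by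
  rw [powersetCard_eq_filter]
  refine filter_congr fun S hS ↦ ?_
  replace hS : (S : Set (Sym2 V)) ⊆ G.edgeSet := by
    rw [← coe_edgeFinset]
    exact coe_subset.mpr (mem_powerset.mp hS)
  have hle : fromEdgeSet (S : Set (Sym2 V)) ≤ G :=
    (fromEdgeSet_mono hS).trans (fromEdgeSet_edgeSet G).le
  rw [numComponents, ← card_edgeSet_fromEdgeSet fun e he ↦ G.not_isDiag_of_mem_edgeSet (hS he),
    card_edgeSet_eq_iff_of_lt_egirth (hgirth.trans_le (egirth_anti hle)),
    Nat.card_eq_fintype_card (α := V)]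
  omega

variable [DecidableEq V]

/-- Whitney's subgraph expansion: inclusion–exclusion over the set of monochromatic edges. -/
theorem properColorings_eq_sum_powerset (G : SimpleGraph V) [DecidableRel G.Adj] (q : ℕ) :
    (properColorings G q : ℤ) =
      ∑ S ∈ G.edgeFinset.powerset, (-1) ^ #S * (q : ℤ) ^ numComponents S := by
  let mono : Sym2 V → Finset (V → Fin q) := fun e ↦ {f | (e.map f).IsDiag}
  have hproper : properColorings G q = #(G.edgeFinset.inf fun e ↦ (mono e)ᶜ) := by
    rw [properColorings, Nat.card_eq_fintype_card, Fintype.card_subtype]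
    congr 1
    ext f
    simp [mono, Finset.mem_inf, Sym2.forall]
  have hmono (S : Finset (Sym2 V)) : #(S.inf mono) = q ^ numComponents S := by
    have hS : S.inf mono = univ.filter fun f : V → Fin q ↦
        ∀ ⦃x y⦄, (fromEdgeSet (S : Set (Sym2 V))).Adj x y → f x = f y := by
      ext f
      simp only [mono, Finset.mem_inf, mem_filter, mem_univ, true_and,
        forall_adj_fromEdgeSet_eq_iff, mem_coe]
    rw [hS, ← Fintype.card_subtype, ← Nat.card_eq_fintype_card,
      Nat.card_congr (ConnectedComponent.liftEquiv _ _), Nat.card_fun, Nat.card_fin,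
      numComponents]
  rw [hproper, inclusion_exclusion_card_inf_compl]
  simp [hmono]

theorem coeff_eq_sum_of_eval_eq_properColorings (G : SimpleGraph V) [DecidableRel G.Adj]
    {P : ℤ[X]} (hP : ∀ q : ℕ, P.eval (q : ℤ) = properColorings G q) (k : ℕ) :
    P.coeff k = ∑ S ∈ G.edgeFinset.powerset with numComponents S = k, (-1) ^ #S := by
  have hPQ : P = ∑ S ∈ G.edgeFinset.powerset, C ((-1) ^ #S) * X ^ numComponents S := by
    refine eq_of_infinite_eval_eq _ _ (Set.infinite_of_injective_forall_mem Nat.cast_injective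
      fun q : ℕ ↦ ?_)
    simp [eval_finsetSum, hP, properColorings_eq_sum_powerset]
  simp_rw [hPQ, finsetSum_coeff, sum_filter, coeff_C_mul_X_pow, @eq_comm _ k]

end SimpleGraph

/-- If `G` has girth at least `g`, then `e_i(G) = C(|E(G)|, i)` for `i = 0, 1, …, g-2`. -/
theorem chromatic_coefficients_of_girth {V : Type*} [Fintype V]
    (G : SimpleGraph V) (g : ℕ) (hG : (g : ℕ∞) ≤ G.egirth)
    (P : Polynomial ℤ)
    (hP : ∀ q : ℕ, P.eval (q : ℤ) = properColorings G q)
    (e : ℕ → ℤ)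
    (he : ∀ k, e k = if k ≤ Fintype.card V then
      (-1 : ℤ) ^ k * P.coeff (Fintype.card V - k) else 0)
    (i : ℕ) (hi : i ≤ g - 2) :
    e i = Nat.choose (Nat.card G.edgeSet) i := by
  classical
  have hgirth : (i + 1 : ℕ∞) < G.egirth := by
    rcases le_or_gt g 1 with hg | hg
    · obtain rfl : i = 0 := by omega
      exact lt_of_lt_of_le (by norm_num) G.three_le_egirth
    · exact lt_of_lt_of_le (by exact_mod_cast (by omega : i + 1 < g)) hG
  have hE : Nat.card G.edgeSet = #G.edgeFinset := by
    rw [Nat.card_eq_fintype_card, edgeFinset_card]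
  rw [he]
  split_ifs with hin
  · rw [coeff_eq_sum_of_eval_eq_properColorings G hP,
      filter_numComponents_eq_powersetCard_of_lt_egirth hgirth hin,
      sum_congr rfl fun S hS ↦ by rw [(mem_powersetCard.mp hS).2], sum_const, card_powersetCard,
      hE, nsmul_eq_mul, mul_left_comm, ← mul_pow, neg_one_mul, neg_neg, one_pow, mul_one]
  · rw [← Nat.card_eq_fintype_card] at hin
    have hacyc := isAcyclic_of_card_lt_egirth (hgirth.trans_le' (by exact_mod_cast by omega))
    have := hacyc.card_edgeSet_add_card_connectedComponent
    rw [Nat.choose_eq_zero_of_lt (by omega), Nat.cast_zero]
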